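/- arXiv:1404.2338 — 6 statements merged into one kernel-verified Lean document; each statement's English description precedes it below -/
import Mathlib

section
/- Let p ≥ 1 and let P(y) = y^p + Σ_{0≤h≤p-1} γ_h·y^h ∈ ℝ[y] be a monic polynomial of degree p. For every map ε : {1,…,p} → {1,−1} with ε(1) = 1 there exist positive integers N_{ε,1}, …, N_{ε,p} such that for all t₁, t₂ ∈ ℝ: P(t₂) = P(t₁) + Σ_{k=1}^{p} ε(k)·(N_{ε,k}/k!)·P^{(k)}(a_k)·(t₂ − t₁)^k, where for 1 ≤ k ≤ p−1 one sets a_k = t₁ if ε(k) = ε(k+1) and a_k = t₂ otherwise (the value a_p is irrelevant since P^{(p)} is the constant p!). -/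
/-!
Put `h = t₂ - t₁` and `c_m = P^{(m)}(t₁) h^m / m!`. Taylor's formula gives `P(t₂) = ∑ c_m` and
`P^{(k)}(t₂) h^k / k! = ∑_m C(m,k) c_m`, so with `M_k = ε(k) N_k` the formula holds for every `P`
of degree `≤ p` as soon as, for each `1 ≤ m ≤ p`, `M_m + ∑_{k < m, a_k = t₂} C(m,k) M_k = 1`.
This triangular system is solved recursively; what remains is that `M_m` has sign `ε(m)`.
The residual `f_j(x) = 1 - ∑_{k ≤ j, a_k = t₂} C(x,k) M_k` normalized by the sign `ε(j+1)`,
`F_j = ε(j+1) f_j`, is a polynomial sequence of some degree `n ≤ j` whose iterated forward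
differences `Δ^s F_j(x)` are nonnegative for `s + x ≥ n`, with `Δ^n F_j > 0`. Such a sequence is
positive beyond `n`, which gives `ε(m) M_m = F_{m-1}(m) > 0`. At a sign change `k` one has
`F_k = C(·,k) F_{k-1}(k) - F_{k-1}`, which inherits the property with `n = k` because
`Δ^s F_{k-1}(k - s) ≤ F_{k-1}(k)`.
-/

open Polynomial Finset fwdDiff

section FwdDiff

variable {M G : Type*} [AddCommMonoid M] [AddCommGroup G]

theorem fwdDiff_iter_sub (h : M) (f g : M → G) (n : ℕ) :
    Δ_[h] ^[n] (f - g) = Δ_[h] ^[n] f - Δ_[h] ^[n] g := by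
  simpa only [fwdDiff_aux.coe_fwdDiffₗ_pow] using map_sub (fwdDiff_aux.fwdDiffₗ M G h ^ n) f g

theorem fwdDiff_iter_eq_zero_of_le {h : M} {f : M → G} {n m : ℕ} (hf : Δ_[h] ^[n] f = 0)
    (hnm : n ≤ m) : Δ_[h] ^[m] f = 0 := by
  obtain ⟨d, rfl⟩ := Nat.exists_eq_add_of_le hnm
  rw [add_comm, Function.iterate_add_apply, hf]
  exact Function.iterate_fixed (fwdDiff_const h (0 : G)) d

theorem fwdDiff_iter_succ_apply (f : ℕ → G) (s m : ℕ) :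
    Δ_[1] ^[s + 1] f m = Δ_[1] ^[s] f (m + 1) - Δ_[1] ^[s] f m := by
  rw [Function.iterate_succ_apply']
  rfl

theorem fwdDiff_iter_choose_of_le {s k : ℕ} (hs : s ≤ k) :
    Δ_[1] ^[s] (fun x ↦ x.choose k : ℕ → ℤ) = fun x ↦ x.choose (k - s) := by
  simpa [Nat.add_sub_cancel' hs] using fwdDiff_iter_choose (k - s) s

end FwdDiff

section DiffPositive

variable {G : Type*} [AddCommGroup G] [PartialOrder G] [IsOrderedAddMonoid G]

structure DiffPositive (n : ℕ) (F : ℕ → G) : Prop where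
  iter_succ_eq_zero : Δ_[1] ^[n + 1] F = 0
  iter_nonneg : ∀ s m, n ≤ s + m → 0 ≤ Δ_[1] ^[s] F m
  iter_pos : 0 < Δ_[1] ^[n] F 0

theorem fwdDiff_iter_nonneg_of_antidiagonal {n : ℕ} {F : ℕ → G}
    (hdeg : Δ_[1] ^[n + 1] F = 0) (hdiag : ∀ s m, s + m = n → 0 ≤ Δ_[1] ^[s] F m) :
    ∀ s m, n ≤ s + m → 0 ≤ Δ_[1] ^[s] F m := by
  intro s m
  induction m generalizing s with
  | zero =>
    intro hs
    rcases (Nat.add_zero s ▸ hs).eq_or_lt with rfl | hlt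
    · exact hdiag n 0 rfl
    · rw [fwdDiff_iter_eq_zero_of_le hdeg hlt]
      rfl
  | succ m ih =>
    intro hs
    rcases hs.eq_or_lt with hs | hs
    · exact hdiag s (m + 1) hs.symm
    · rw [← sub_add_cancel (Δ_[1] ^[s] F (m + 1)) (Δ_[1] ^[s] F m), ← fwdDiff_iter_succ_apply]
      exact add_nonneg (ih (s + 1) (by omega)) (ih s (by omega))

namespace DiffPositive

variable {n : ℕ} {F : ℕ → G}

theorem iter_pos_of_lt (hF : DiffPositive n F) {s m : ℕ} (hs : s ≤ n) (hsm : n < s + m) :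
    0 < Δ_[1] ^[s] F m := by
  induction m generalizing s with
  | zero => omega
  | succ m ih =>
    rw [← sub_add_cancel (Δ_[1] ^[s] F (m + 1)) (Δ_[1] ^[s] F m), ← fwdDiff_iter_succ_apply]
    rcases hs.eq_or_lt with rfl | hs
    · rw [hF.iter_succ_eq_zero, Pi.zero_apply, zero_add]
      rcases m with _ | m
      · exact hF.iter_pos
      · exact ih le_rfl (by omega)
    · exact add_pos_of_pos_of_nonneg (ih hs (by omega)) (hF.iter_nonneg s m (by omega))

theorem pos (hF : DiffPositive n F) {m : ℕ} (hm : n < m) : 0 < F m :=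
  hF.iter_pos_of_lt (s := 0) (Nat.zero_le n) (by omega)

theorem iter_le_apply_add (hF : DiffPositive n F) {s m : ℕ} (hsm : n < s + m) :
    Δ_[1] ^[s] F m ≤ F (m + s) := by
  induction s generalizing m with
  | zero => rfl
  | succ s ih =>
    rw [fwdDiff_iter_succ_apply, ← add_assoc, add_right_comm]
    calc Δ_[1] ^[s] F (m + 1) - Δ_[1] ^[s] F m ≤ Δ_[1] ^[s] F (m + 1) :=
          sub_le_self _ (hF.iter_nonneg s m (by omega))
      _ ≤ F (m + 1 + s) := ih (by omega)

theorem const_one : DiffPositive 0 (fun _ ↦ (1 : ℤ)) := by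
  have hdeg : Δ_[1] ^[0 + 1] (fun _ ↦ (1 : ℤ)) = 0 := fwdDiff_const 1 1
  refine ⟨hdeg, fun s m _ ↦ ?_, zero_lt_one⟩
  rcases s with _ | s
  · exact zero_le_one
  · rw [fwdDiff_iter_eq_zero_of_le hdeg (Nat.succ_pos s)]
    rfl

theorem choose_smul_sub {n k : ℕ} {F : ℕ → ℤ} (hF : DiffPositive n F) (hk : n < k) :
    DiffPositive k (F k • (fun x ↦ x.choose k : ℕ → ℤ) - F) := by
  have hdiff : ∀ s ≤ k, Δ_[1] ^[s] (F k • (fun x ↦ x.choose k : ℕ → ℤ) - F) =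
      F k • (fun x ↦ x.choose (k - s) : ℕ → ℤ) - Δ_[1] ^[s] F := fun s hs ↦ by
    rw [fwdDiff_iter_sub, fwdDiff_iter_const_smul, fwdDiff_iter_choose_of_le hs]
  have hFk : Δ_[1] ^[k] F = 0 := fwdDiff_iter_eq_zero_of_le hF.iter_succ_eq_zero hk
  have hdeg : Δ_[1] ^[k + 1] (F k • (fun x ↦ x.choose k : ℕ → ℤ) - F) = 0 := by
    rw [Function.iterate_succ_apply', hdiff k le_rfl, hFk]
    ext x
    simp [fwdDiff]
  refine ⟨hdeg, fwdDiff_iter_nonneg_of_antidiagonal hdeg ?_, ?_⟩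
  · intro s m hsm
    obtain rfl : m = k - s := by omega
    rw [hdiff s (by omega)]
    simpa [Nat.sub_add_cancel (show s ≤ k by omega)] using
      hF.iter_le_apply_add (s := s) (m := k - s) (by omega)
  · rw [hdiff k le_rfl, hFk]
    simpa using hF.pos hk

end DiffPositive

end DiffPositive

section MixedTaylorCoeff

variable (sw : ℕ → Prop) [DecidablePred sw]

def mixedTaylorResidual : ℕ → ℕ → ℤ
  | 0, _ => 1
  | j + 1, x => mixedTaylorResidual j x -
      if sw (j + 1) then x.choose (j + 1) * mixedTaylorResidual j (j + 1) else 0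

/-- The signed coefficient `ε(k) N_{ε,k}` of the paper. -/
def mixedTaylorCoeff (k : ℕ) : ℤ := mixedTaylorResidual sw (k - 1) k

def switchSign : ℕ → ℤ
  | 0 => 1
  | j + 1 => if sw (j + 1) then -switchSign j else switchSign j

theorem mixedTaylorResidual_eq (j x : ℕ) :
    mixedTaylorResidual sw j x =
      1 - ∑ k ∈ Icc 1 j, if sw k then x.choose k * mixedTaylorCoeff sw k else 0 := by
  induction j with
  | zero => simp [mixedTaylorResidual]
  | succ j ih =>
    rw [mixedTaylorResidual, ih, sum_Icc_succ_top (by omega), mixedTaylorCoeff,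
      Nat.add_sub_cancel]
    ring

theorem diffPositive_switchSign_smul_mixedTaylorResidual (j : ℕ) :
    ∃ n ≤ j, DiffPositive n (switchSign sw j • mixedTaylorResidual sw j) := by
  induction j with
  | zero =>
    exact ⟨0, le_rfl, by simpa [switchSign, mixedTaylorResidual] using DiffPositive.const_one⟩
  | succ j ih =>
    obtain ⟨n, hn, hF⟩ := ih
    by_cases hj : sw (j + 1)
    · refine ⟨j + 1, le_rfl, ?_⟩
      convert hF.choose_smul_sub (k := j + 1) (by omega) using 1
      ext x
      simp only [switchSign, hj, ↓reduceIte, mixedTaylorResidual, Pi.smul_apply, neg_mul,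
        zsmul_eq_mul, Int.cast_mul, Pi.sub_apply, Pi.mul_apply, Pi.intCast_apply, Int.cast_eq]
      ring
    · refine ⟨n, by omega, ?_⟩
      convert hF using 2 <;> simp [switchSign, mixedTaylorResidual, hj]

theorem switchSign_mul_mixedTaylorCoeff_pos {k : ℕ} (hk : 1 ≤ k) :
    0 < switchSign sw (k - 1) * mixedTaylorCoeff sw k := by
  obtain ⟨n, hn, hF⟩ := diffPositive_switchSign_smul_mixedTaylorResidual sw (k - 1)
  exact hF.pos (by omega)

theorem sum_choose_mul_mixedTaylorCoeff {m p : ℕ} (hm : m ≤ p) :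
    ∑ k ∈ Icc 1 p, mixedTaylorCoeff sw k * (if sw k ∨ k = m then (m.choose k : ℤ) else 0) =
      if m = 0 then 0 else 1 := by
  rw [← sum_subset (Icc_subset_Icc_right hm) fun k hk hkm ↦ by
    rw [mem_Icc] at hk hkm
    rw [Nat.choose_eq_zero_of_lt (by omega), Nat.cast_zero, ite_self, mul_zero]]
  rcases m with _ | j
  · simp
  · have hres := mixedTaylorResidual_eq sw j (j + 1)
    have hlow : ∀ k ∈ Icc 1 j, mixedTaylorCoeff sw k *
        (if sw k ∨ k = j + 1 then ((j + 1).choose k : ℤ) else 0) =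
          if sw k then ((j + 1).choose k : ℤ) * mixedTaylorCoeff sw k else 0 :=
      fun k hk ↦ by
        have : k ≠ j + 1 := by rw [mem_Icc] at hk; omega
        split_ifs <;> simp_all [mul_comm]
    rw [sum_Icc_succ_top (by omega), if_pos (Or.inr rfl), Nat.choose_self, Nat.cast_one, mul_one,
      sum_congr rfl hlow, if_neg (Nat.succ_ne_zero j), mixedTaylorCoeff, Nat.add_sub_cancel]
    omega

end MixedTaylorCoeff

section Taylor

variable {R : Type*} [CommRing R]

theorem hasseDeriv_eval_add_mul_pow {P : R[X]} {n : ℕ} (hP : P.natDegree ≤ n) (k : ℕ) (a h : R) :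
    (hasseDeriv k P).eval (a + h) * h ^ k =
      ∑ m ∈ range (n + 1), (m.choose k : R) * ((hasseDeriv m P).eval a * h ^ m) := by
  have hhigh : ∀ m ∈ range (k + (n + 1)), m ∉ range (n + 1) →
      (m.choose k : R) * ((hasseDeriv m P).eval a * h ^ m) = 0 := fun m _ hm ↦ by
    rw [hasseDeriv_eq_zero_of_lt_natDegree P m (by rw [mem_range] at hm; omega)]
    simp
  have hlow : ∀ m ∈ range k, (m.choose k : R) * ((hasseDeriv m P).eval a * h ^ m) = 0 :=
    fun m hm ↦ by rw [Nat.choose_eq_zero_of_lt (mem_range.1 hm), Nat.cast_zero, zero_mul]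
  have hdeg : (taylor a (hasseDeriv k P)).natDegree < n + 1 := by
    have := natDegree_hasseDeriv_le P k
    rw [natDegree_taylor]
    omega
  rw [sum_subset (range_subset_range.2 (Nat.le_add_left _ _)) hhigh, sum_range_add,
    sum_eq_zero hlow, zero_add, add_comm a, ← taylor_eval, eval_eq_sum_range' hdeg, sum_mul]
  refine sum_congr rfl fun i _ ↦ ?_
  rw [taylor_coeff, ← LinearMap.comp_apply, hasseDeriv_comp, LinearMap.smul_apply, eval_smul,
    nsmul_eq_mul, add_comm i k, Nat.choose_symm_add, pow_add]
  ring

theorem eval_eq_add_sum_hasseDeriv_of_sum_choose {P : R[X]} {p : ℕ} (hP : P.natDegree ≤ p)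
    (sw : ℕ → Prop) [DecidablePred sw] (M : ℕ → R)
    (hM : ∀ m ≤ p, ∑ k ∈ Icc 1 p, M k * (if sw k ∨ k = m then (m.choose k : R) else 0) =
      if m = 0 then 0 else 1)
    (t₁ t₂ : R) :
    P.eval t₂ = P.eval t₁ + ∑ k ∈ Icc 1 p,
      M k * ((hasseDeriv k P).eval (if sw k then t₂ else t₁) * (t₂ - t₁) ^ k) := by
  set x : ℕ → R := fun m ↦ (hasseDeriv m P).eval t₁ * (t₂ - t₁) ^ m with hx
  have hrow : ∀ k ≤ p, (hasseDeriv k P).eval (if sw k then t₂ else t₁) * (t₂ - t₁) ^ k =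
      ∑ m ∈ range (p + 1), (if sw k ∨ k = m then (m.choose k : R) else 0) * x m := by
    intro k hk
    by_cases hsw : sw k
    · simp only [hsw, if_true, true_or]
      rw [← hasseDeriv_eval_add_mul_pow hP, add_sub_cancel]
    · simp only [hsw, if_false, false_or]
      simp_rw [ite_mul, zero_mul]
      rw [sum_ite_eq, if_pos (mem_range.2 (Nat.lt_succ_of_le hk)), Nat.choose_self, Nat.cast_one,
        one_mul]
  have htaylor : P.eval t₂ = ∑ m ∈ range (p + 1), x m := by
    simpa using hasseDeriv_eval_add_mul_pow hP 0 t₁ (t₂ - t₁)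
  have hsum : ∑ k ∈ Icc 1 p,
      M k * ((hasseDeriv k P).eval (if sw k then t₂ else t₁) * (t₂ - t₁) ^ k) =
        ∑ m ∈ range (p + 1), (if m = 0 then 0 else 1) * x m := by
    calc _ = ∑ k ∈ Icc 1 p, ∑ m ∈ range (p + 1),
          M k * ((if sw k ∨ k = m then (m.choose k : R) else 0) * x m) :=
          sum_congr rfl fun k hk ↦ by rw [hrow k (mem_Icc.1 hk).2, mul_sum]
      _ = ∑ m ∈ range (p + 1),
          (∑ k ∈ Icc 1 p, M k * (if sw k ∨ k = m then (m.choose k : R) else 0)) * x m := by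
          rw [sum_comm]
          simp_rw [sum_mul, mul_assoc]
      _ = _ := sum_congr rfl fun m hm ↦ by rw [hM m (Nat.lt_succ_iff.1 (mem_range.1 hm))]
  rw [hsum, htaylor, sum_range_succ', sum_range_succ' (fun m ↦ (if m = 0 then 0 else 1) * x m)]
  simp [hx, add_comm]

end Taylor

section SignPattern

variable {p : ℕ} {ε : ℕ → ℤ}

/-- The positions `k` at which the mixed Taylor formula evaluates `P^{(k)}` at `t₂`. -/
abbrev signChanges (p : ℕ) (ε : ℕ → ℤ) (k : ℕ) : Prop := k ≠ p ∧ ε k ≠ ε (k + 1)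

theorem eq_switchSign_signChanges (hε : ∀ k, 1 ≤ k → k ≤ p → ε k = 1 ∨ ε k = -1)
    (hε1 : ε 1 = 1) {j : ℕ} (hj : j < p) : ε (j + 1) = switchSign (signChanges p ε) j := by
  induction j with
  | zero => exact hε1
  | succ j ih =>
    rw [switchSign, ← ih (by omega)]
    have h₁ := hε (j + 1) (by omega) (by omega)
    have h₂ := hε (j + 1 + 1) (by omega) (by omega)
    split_ifs with h <;> omega

theorem mul_mixedTaylorCoeff_signChanges_pos (hε : ∀ k, 1 ≤ k → k ≤ p → ε k = 1 ∨ ε k = -1)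
    (hε1 : ε 1 = 1) {k : ℕ} (hk : 1 ≤ k) (hkp : k ≤ p) :
    0 < ε k * mixedTaylorCoeff (signChanges p ε) k := by
  have hsign := eq_switchSign_signChanges hε hε1 (show k - 1 < p by omega)
  rw [Nat.sub_add_cancel hk] at hsign
  exact hsign ▸ switchSign_mul_mixedTaylorCoeff_pos _ hk

end SignPattern

theorem Int.mul_toNat_mul_of_eq_one_or_neg_one {u a : ℤ} (hu : u = 1 ∨ u = -1)
    (h : 0 ≤ u * a) : u * (u * a).toNat = a := by
  rw [Int.toNat_of_nonneg h]
  rcases hu with rfl | rfl <;> ring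

theorem mixed_taylor_formula_general (p : ℕ) (P : Polynomial ℝ)
    (hdeg : P.natDegree = p)
    (ε : ℕ → ℤ) (hε : ∀ k, 1 ≤ k → k ≤ p → ε k = 1 ∨ ε k = -1) (hε1 : ε 1 = 1) :
    ∃ N : ℕ → ℕ, (∀ k, 1 ≤ k → k ≤ p → 0 < N k) ∧
      ∀ t₁ t₂ : ℝ,
        P.eval t₂ = P.eval t₁ +
          ∑ k ∈ Finset.Icc 1 p,
            (ε k : ℝ) * (N k : ℝ) / (k.factorial : ℝ) *
              (Polynomial.derivative^[k] P).eval
                (if k = p then t₁ else if ε k = ε (k + 1) then t₁ else t₂) *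
              (t₂ - t₁) ^ k := by
  set M := mixedTaylorCoeff (signChanges p ε)
  have hpos : ∀ k, 1 ≤ k → k ≤ p → 0 < ε k * M k := fun _ ↦
    mul_mixedTaylorCoeff_signChanges_pos hε hε1
  refine ⟨fun k ↦ (ε k * M k).toNat, fun k hk hkp ↦ by simpa using hpos k hk hkp,
    fun t₁ t₂ ↦ ?_⟩
  rw [eval_eq_add_sum_hasseDeriv_of_sum_choose hdeg.le (signChanges p ε) (fun k ↦ (M k : ℝ))
    (fun m hm ↦ by exact_mod_cast sum_choose_mul_mixedTaylorCoeff _ hm) t₁ t₂]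
  congr 1
  refine sum_congr rfl fun k hk ↦ ?_
  obtain ⟨hk1, hkp⟩ := mem_Icc.1 hk
  have hN : (ε k : ℝ) * ((ε k * M k).toNat : ℝ) = M k := by
    exact_mod_cast Int.mul_toNat_mul_of_eq_one_or_neg_one (hε k hk1 hkp) (hpos k hk1 hkp).le
  have hpoint : (if k = p then t₁ else if ε k = ε (k + 1) then t₁ else t₂) =
      if signChanges p ε k then t₂ else t₁ := by
    split_ifs <;> tauto
  rw [← factorial_smul_hasseDeriv, hpoint, LinearMap.smul_apply, eval_smul, nsmul_eq_mul, ← hN]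
  field_simp

/-- Mixed Taylor Formulas (Proposition `prop2.4.4`): for a monic polynomial
`P = y^p + ∑ γ_h y^h` of degree `p ≥ 1` over `ℝ` and every sign pattern
`ε : {1,…,p} → {1,-1}` with `ε 1 = 1`, there exist positive integers
`N_{ε,1}, …, N_{ε,p}` such that for all `t₁ t₂`,
`P(t₂) = P(t₁) + ∑_{k=1}^p ε(k) (N_{ε,k}/k!) P^{(k)}(a_k) (t₂-t₁)^k`,
where `a_k = t₁` if `ε(k) = ε(k+1)` and `a_k = t₂` otherwise (for `k < p`),
the choice of `a_p` being irrelevant since `P^{(p)}` is constant. -/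
theorem mixed_taylor_formula (p : ℕ) (hp : 1 ≤ p) (P : Polynomial ℝ)
    (hmon : P.Monic) (hdeg : P.natDegree = p)
    (ε : ℕ → ℤ) (hε : ∀ k, 1 ≤ k → k ≤ p → ε k = 1 ∨ ε k = -1) (hε1 : ε 1 = 1) :
    ∃ N : ℕ → ℕ, (∀ k, 1 ≤ k → k ≤ p → 0 < N k) ∧
      ∀ t₁ t₂ : ℝ,
        P.eval t₂ = P.eval t₁ +
          ∑ k ∈ Finset.Icc 1 p,
            (ε k : ℝ) * (N k : ℝ) / (k.factorial : ℝ) *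
              (Polynomial.derivative^[k] P).eval
                (if k = p then t₁ else if ε k = ε (k + 1) then t₁ else t₂) *
              (t₂ - t₁) ^ k :=
  mixed_taylor_formula_general p P hdeg ε hε hε1
end

section
/- Let P(y) = Σ_{0≤h≤p} γ_h·y^h ∈ ℝ[y] with γ_p ≠ 0 and let θ₁, θ₂ ∈ ℝ. For i = 1,2 define η_i : {0,…,p} → {−1,0,1} by η_i(k) = sign(P^{(k)}(θ_i)) for 0 ≤ k ≤ p−1 and η_i(p) = sign(γ_p). Assume η₁ ≠ η₂ and, letting q be the largest k with η₁(k) ≠ η₂(k) (necessarily q ≤ p−1), assume that either η₁(q) < η₂(q) and η₁(q+1) = 1, or η₁(q) > η₂(q) and η₁(q+1) = −1. Then θ₁ < θ₂. -/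
open Polynomial Set

set_option linter.unusedVariables false

private lemma aux_lt_of_sign_lt {a b : ℝ} (h : SignType.sign a < SignType.sign b) : a < b := by
  rcases lt_trichotomy a 0 with ha | ha | ha <;> rcases lt_trichotomy b 0 with hb | hb | hb <;>
    simp_all [sign_eq_neg_one_iff.mpr, sign_eq_one_iff.mpr] <;> linarith

private lemma aux_sign_const_mono {f : ℝ → ℝ} {m M : ℝ} (hmM : m ≤ M)
    (hf : StrictMonoOn f (Icc m M)) (hs : SignType.sign (f m) = SignType.sign (f M)) :
    ∀ x ∈ Icc m M, SignType.sign (f x) = SignType.sign (f m) := by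
  intro x hx
  have hmmem : m ∈ Icc m M := left_mem_Icc.mpr hmM
  have hMmem : M ∈ Icc m M := right_mem_Icc.mpr hmM
  rcases lt_trichotomy (f m) 0 with h0 | h0 | h0
  · have hM0 : f M < 0 := by
      have := hs; rw [sign_eq_neg_one_iff.mpr h0] at this
      exact sign_eq_neg_one_iff.mp this.symm
    have : f x ≤ f M := hf.monotoneOn hx hMmem hx.2
    rw [sign_eq_neg_one_iff.mpr h0, sign_eq_neg_one_iff.mpr (lt_of_le_of_lt this hM0)]
  · have hM0 : f M = 0 := by
      have := hs; rw [h0, sign_zero] at this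
      exact sign_eq_zero_iff.mp this.symm
    rcases eq_or_lt_of_le hmM with heq | hlt
    · have : x = m := by
        have := hx; rw [← heq] at this
        exact le_antisymm this.2 this.1
      rw [this]
    · exact absurd (hf hmmem hMmem hlt) (by rw [h0, hM0]; exact lt_irrefl 0)
  · have : f m ≤ f x := hf.monotoneOn hmmem hx hx.1
    rw [sign_eq_one_iff.mpr h0, sign_eq_one_iff.mpr (lt_of_lt_of_le h0 this)]

private lemma aux_sign_const_anti {f : ℝ → ℝ} {m M : ℝ} (hmM : m ≤ M)
    (hf : StrictAntiOn f (Icc m M)) (hs : SignType.sign (f m) = SignType.sign (f M)) :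
    ∀ x ∈ Icc m M, SignType.sign (f x) = SignType.sign (f m) := by
  intro x hx
  have := aux_sign_const_mono (f := fun y => -f y) hmM
    (fun a ha b hb hab => neg_lt_neg (hf ha hb hab))
    (by simp only [Left.sign_neg, hs]) x hx
  simp only [Left.sign_neg, neg_inj] at this
  exact this

/-- Proposition `lemma_order_thom_encoding`: if the extended Thom encodings
`η₁, η₂` of `θ₁, θ₂` with respect to `P` (with `η_i k = sign (P^{(k)}(θ_i))`
for `k ≤ p-1` and `η_i p = sign γ_p`) differ, `q` is the largest index of
disagreement, and either `η₁ q < η₂ q` with `η₁ (q+1) = 1`, or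
`η₁ q > η₂ q` with `η₁ (q+1) = -1`, then `θ₁ < θ₂`. -/
theorem thom_encoding_order (p : ℕ) (P : Polynomial ℝ)
    (hdeg : P.natDegree ≤ p) (hlc : P.coeff p ≠ 0)
    (θ₁ θ₂ : ℝ) (η₁ η₂ : ℕ → SignType)
    (hη₁ : ∀ k ≤ p, η₁ k =
      if k = p then SignType.sign (P.coeff p)
      else SignType.sign ((Polynomial.derivative^[k] P).eval θ₁))
    (hη₂ : ∀ k ≤ p, η₂ k =
      if k = p then SignType.sign (P.coeff p)
      else SignType.sign ((Polynomial.derivative^[k] P).eval θ₂))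
    (q : ℕ) (hqp : q ≤ p - 1)
    (hne : η₁ q ≠ η₂ q)
    (hmax : ∀ k, q < k → k ≤ p → η₁ k = η₂ k)
    (hcase : (η₁ q < η₂ q ∧ η₁ (q + 1) = 1) ∨ (η₂ q < η₁ q ∧ η₁ (q + 1) = -1)) :
    θ₁ < θ₂ := by
  -- q < p
  have hqlt : q < p := by
    rcases Nat.eq_zero_or_pos p with hp0 | hp0
    · exfalso
      have hq0 : q = 0 := by omega
      apply hne
      rw [hq0, hη₁ 0 (by omega), hη₂ 0 (by omega), hp0]
      simp
    · omega
  set m := min θ₁ θ₂ with hm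
  set M := max θ₁ θ₂ with hM
  have hmM : m ≤ M := min_le_max
  have hθ₁ : θ₁ ∈ Icc m M := ⟨min_le_left _ _, le_max_left _ _⟩
  have hθ₂ : θ₂ ∈ Icc m M := ⟨min_le_right _ _, le_max_right _ _⟩
  -- Key claim by downward induction
  have key : ∀ d : ℕ, d ≤ p - (q + 1) → ∀ x ∈ Icc m M,
      SignType.sign ((derivative^[p - d] P).eval x) = η₁ (p - d) := by
    intro d
    induction d with
    | zero =>
      intro _ x _
      -- derivative^[p] P is the constant p! * coeff p
      have hQdeg : (derivative^[p] P).natDegree = 0 :=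
        Nat.le_zero.mp ((natDegree_iterate_derivative P p).trans (by omega))
      have hQ : derivative^[p] P = C ((derivative^[p] P).coeff 0) :=
        eq_C_of_natDegree_eq_zero hQdeg
      have hc : (derivative^[p] P).coeff 0 = (p.descFactorial p : ℝ) * P.coeff p := by
        rw [coeff_iterate_derivative]
        simp [nsmul_eq_mul]
      rw [Nat.sub_zero, hQ, eval_C, hc, hη₁ p le_rfl, if_pos rfl]
      have hfac : (0:ℝ) < (p.descFactorial p : ℝ) := by
        rw [Nat.descFactorial_self]
        exact_mod_cast p.factorial_pos
      rw [sign_mul, sign_pos hfac, one_mul]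
    | succ d ih =>
      intro hd x hx
      have hd' : d ≤ p - (q + 1) := by omega
      set j := p - (d + 1) with hj
      have hj1 : j + 1 = p - d := by omega
      have hjq : q + 1 ≤ j := by omega
      have hjp : j < p := by omega
      set Q := derivative^[j] P with hQdef
      have hder : ∀ y ∈ Icc m M,
          SignType.sign ((derivative Q).eval y) = η₁ (j + 1) := by
        intro y hy
        have := ih hd' y hy
        rw [← hj1] at this
        rwa [Function.iterate_succ_apply'] at this
      have hs₁ : SignType.sign (Q.eval θ₁) = η₁ j := by
        rw [hη₁ j (by omega), if_neg (by omega)]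
      have hs₂ : SignType.sign (Q.eval θ₂) = η₁ j := by
        rw [hmax j (by omega) (by omega), hη₂ j (by omega), if_neg (by omega)]
      have hsm : SignType.sign (Q.eval m) = η₁ j := by
        rcases min_choice θ₁ θ₂ with h | h <;> rw [hm, h] <;> assumption
      have hsM : SignType.sign (Q.eval M) = η₁ j := by
        rcases max_choice θ₁ θ₂ with h | h <;> rw [hM, h] <;> assumption
      have hcont : ContinuousOn (fun y => Q.eval y) (Icc m M) :=
        (Polynomial.continuous Q).continuousOn
      have hgoal : SignType.sign (Q.eval x) = η₁ j := by
        rcases hσ : η₁ (j + 1) with _ | _ | _ <;>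
          simp only [SignType.zero_eq_zero, SignType.neg_eq_neg_one, SignType.pos_eq_one] at hσ
        · -- zero case: derivative Q vanishes on the interval
          rcases eq_or_lt_of_le hmM with heq | hlt
          · have : x = m := by
              have := hx; rw [← heq] at this
              exact le_antisymm this.2 this.1
            rw [this, hsm]
          · have hzero : derivative Q = 0 := by
              apply Polynomial.eq_zero_of_infinite_isRoot
              apply Set.Infinite.mono (s := Icc m M)
              · intro y hy
                have := hder y hy
                rw [hσ] at this
                exact sign_eq_zero_iff.mp this
              · exact Set.Icc_infinite hlt
            have hQC : Q = C (Q.coeff 0) :=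
              eq_C_of_natDegree_eq_zero (natDegree_eq_zero_of_derivative_eq_zero hzero)
            rw [show Q.eval x = Q.eval θ₁ by rw [hQC]; simp, hs₁]
        · -- negative case: strictly decreasing
          have hneg : ∀ y ∈ interior (Icc m M), deriv (fun z => Q.eval z) y < 0 := by
            intro y hy
            rw [Polynomial.deriv]
            have := hder y (interior_subset hy)
            rw [hσ] at this
            exact sign_eq_neg_one_iff.mp this
          have hanti : StrictAntiOn (fun y => Q.eval y) (Icc m M) :=
            strictAntiOn_of_deriv_neg (convex_Icc m M) hcont hneg
          have := aux_sign_const_anti hmM hanti (by rw [hsm, hsM]) x hx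
          rw [this, hsm]
        · -- positive case: strictly increasing
          have hpos : ∀ y ∈ interior (Icc m M), 0 < deriv (fun z => Q.eval z) y := by
            intro y hy
            rw [Polynomial.deriv]
            have := hder y (interior_subset hy)
            rw [hσ] at this
            exact sign_eq_one_iff.mp this
          have hmono : StrictMonoOn (fun y => Q.eval y) (Icc m M) :=
            strictMonoOn_of_deriv_pos (convex_Icc m M) hcont hpos
          have := aux_sign_const_mono hmM hmono (by rw [hsm, hsM]) x hx
          rw [this, hsm]
      exact hgoal
  -- Now apply at level q+1
  have hkey : ∀ x ∈ Icc m M,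
      SignType.sign ((derivative (derivative^[q] P)).eval x) = η₁ (q + 1) := by
    intro x hx
    have := key (p - (q + 1)) le_rfl x hx
    rw [show p - (p - (q + 1)) = q + 1 by omega] at this
    rwa [Function.iterate_succ_apply'] at this
  set Q := derivative^[q] P with hQdef
  have hs₁ : SignType.sign (Q.eval θ₁) = η₁ q := by
    rw [hη₁ q (by omega), if_neg (by omega)]
  have hs₂ : SignType.sign (Q.eval θ₂) = η₂ q := by
    rw [hη₂ q (by omega), if_neg (by omega)]
  have hcont : ContinuousOn (fun y => Q.eval y) (Icc m M) :=
    (Polynomial.continuous Q).continuousOn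
  rcases hcase with ⟨hlt, hσ⟩ | ⟨hlt, hσ⟩
  · -- increasing case
    have hpos : ∀ y ∈ interior (Icc m M), 0 < deriv (fun z => Q.eval z) y := by
      intro y hy
      rw [Polynomial.deriv]
      have := hkey y (interior_subset hy)
      rw [hσ] at this
      exact sign_eq_one_iff.mp this
    have hmono : StrictMonoOn (fun y => Q.eval y) (Icc m M) :=
      strictMonoOn_of_deriv_pos (convex_Icc m M) hcont hpos
    have hval : Q.eval θ₁ < Q.eval θ₂ := by
      apply aux_lt_of_sign_lt
      rw [hs₁, hs₂]; exact hlt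
    by_contra hcon
    push_neg at hcon
    exact absurd (hmono.monotoneOn hθ₂ hθ₁ hcon) (not_le.mpr hval)
  · -- decreasing case
    have hneg : ∀ y ∈ interior (Icc m M), deriv (fun z => Q.eval z) y < 0 := by
      intro y hy
      rw [Polynomial.deriv]
      have := hkey y (interior_subset hy)
      rw [hσ] at this
      exact sign_eq_neg_one_iff.mp this
    have hanti : StrictAntiOn (fun y => Q.eval y) (Icc m M) :=
      strictAntiOn_of_deriv_neg (convex_Icc m M) hcont hneg
    have hval : Q.eval θ₂ < Q.eval θ₁ := by
      apply aux_lt_of_sign_lt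
      rw [hs₁, hs₂]; exact hlt
    by_contra hcon
    push_neg at hcon
    exact absurd (hanti.antitoneOn hθ₂ hθ₁ hcon) (not_le.mpr hval)
end

section
/- Let P(y) = Σ_{0≤h≤p} γ_h·y^h ∈ ℝ[y] with γ_p ≠ 0 and let θ₁, θ₂ ∈ ℝ. For i = 1,2 define η_i : {0,…,p} → {−1,0,1} by η_i(k) = sign(P^{(k)}(θ_i)) for 0 ≤ k ≤ p−1 and η_i(p) = sign(γ_p). Assume η₁ ≠ η₂ and let q be the largest k with η₁(k) ≠ η₂(k). Then for every k with q < k < p one has P^{(k)}(θ₁) ≠ 0 (equivalently, η₁(k) = η₂(k) ≠ 0): it is impossible that η₁(k) = η₂(k) = 0 for some k with q < k < p. -/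
/-!
Downward induction from the nonzero constant `P^{(p)}`: if `P^{(k+1)}` has no root between `θ₁`
and `θ₂`, then `P^{(k)}` is strictly monotone there, so `P^{(k)}(θ₁) ≠ P^{(k)}(θ₂)`. As these two
values have the same sign (`k > q`), neither vanishes, and by monotonicity `P^{(k)}` has no root
between them either. That `θ₁ ≠ θ₂` is forced by `η₁(q) ≠ η₂(q)`.
-/

open Polynomial Set

theorem eq_zero_of_zero_mem_uIcc_of_sign_eq {α : Type*} [Ring α] [LinearOrder α]
    [IsStrictOrderedRing α] {u v : α} (h0 : (0 : α) ∈ uIcc u v)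
    (hsign : SignType.sign u = SignType.sign v) : u = 0 ∧ v = 0 := by
  rw [mem_uIcc] at h0
  rcases lt_trichotomy u 0 with hu | rfl | hu
  · have hv := sign_eq_neg_one_iff.mp (sign_neg hu ▸ hsign).symm
    rcases h0 with h0 | h0 <;> exact absurd h0 (by grind)
  · rw [sign_zero, eq_comm, sign_eq_zero_iff] at hsign
    exact ⟨rfl, hsign⟩
  · have hv := sign_eq_one_iff.mp (sign_pos hu ▸ hsign).symm
    rcases h0 with h0 | h0 <;> exact absurd h0 (by grind)

namespace Polynomial

theorem iterate_derivative_eq_C_of_natDegree_le {R : Type*} [Semiring R] {f : R[X]} {n : ℕ}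
    (h : f.natDegree ≤ n) : derivative^[n] f = C (n.factorial • f.coeff n) := by
  have h0 : (derivative^[n] f).natDegree = 0 := by
    have := natDegree_iterate_derivative f n; omega
  rw [eq_C_of_natDegree_eq_zero h0, coeff_iterate_derivative, zero_add, Nat.descFactorial_self]

theorem strictMonoOn_or_strictAntiOn_eval_of_derivative_ne_zero {f : ℝ[X]} {s : Set ℝ}
    (hs : Convex ℝ s) (hf' : ∀ x ∈ s, f.derivative.eval x ≠ 0) :
    StrictMonoOn f.eval s ∨ StrictAntiOn f.eval s := by
  rcases hasDerivWithinAt_forall_lt_or_forall_gt_of_forall_ne hs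
    (fun x _ => (f.hasDerivAt x).hasDerivWithinAt) hf' with hneg | hpos
  · exact .inr <| strictAntiOn_of_deriv_neg hs f.continuousOn fun x hx => by
      rw [Polynomial.deriv]; exact hneg x (interior_subset hx)
  · exact .inl <| strictMonoOn_of_deriv_pos hs f.continuousOn fun x hx => by
      rw [Polynomial.deriv]; exact hpos x (interior_subset hx)

theorem eval_ne_zero_on_uIcc_of_sign_eq {f : ℝ[X]} {a b : ℝ} (hab : a ≠ b)
    (hf' : ∀ x ∈ uIcc a b, f.derivative.eval x ≠ 0)
    (hsign : SignType.sign (f.eval a) = SignType.sign (f.eval b)) :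
    ∀ x ∈ uIcc a b, f.eval x ≠ 0 := by
  obtain ⟨hmaps, hinj⟩ : MapsTo f.eval (uIcc a b) (uIcc (f.eval a) (f.eval b)) ∧
      InjOn f.eval (uIcc a b) := by
    rcases strictMonoOn_or_strictAntiOn_eval_of_derivative_ne_zero (convex_uIcc a b) hf' with h | h
    · exact ⟨h.monotoneOn.mapsTo_uIcc, h.injOn⟩
    · exact ⟨h.antitoneOn.mapsTo_uIcc, h.injOn⟩
  have hne : f.eval a ≠ f.eval b := fun h => hab (hinj left_mem_uIcc right_mem_uIcc h)
  intro x hx hx0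
  have h0 : (0 : ℝ) ∈ uIcc (f.eval a) (f.eval b) := hx0 ▸ hmaps hx
  obtain ⟨ha, hb⟩ := eq_zero_of_zero_mem_uIcc_of_sign_eq h0 hsign
  exact hne (ha.trans hb.symm)

theorem iterate_derivative_eval_ne_zero_on_uIcc (P : ℝ[X]) {a b : ℝ} (hab : a ≠ b) {q p : ℕ}
    (htop : ∀ x ∈ uIcc a b, (derivative^[p] P).eval x ≠ 0)
    (hsign : ∀ k, q < k → k < p → SignType.sign ((derivative^[k] P).eval a) =
      SignType.sign ((derivative^[k] P).eval b)) :
    ∀ k, q < k → k ≤ p → ∀ x ∈ uIcc a b, (derivative^[k] P).eval x ≠ 0 := by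
  intro k hqk hkp
  induction hkp using Nat.decreasingInduction with
  | self => exact htop
  | of_succ k hkp ih =>
    refine eval_ne_zero_on_uIcc_of_sign_eq hab (fun x hx => ?_) (hsign k hqk hkp)
    rw [← Function.iterate_succ_apply' derivative]
    exact ih (hqk.trans k.lt_succ_self) x hx

end Polynomial

/-- Claim following Proposition `lemma_order_thom_encoding`: with `η₁, η₂`
the extended Thom encodings of `θ₁, θ₂` with respect to `P` and `q` the
largest index of disagreement, it is impossible that `η₁ k = η₂ k = 0` for
some `q < k < p`; equivalently `P^{(k)}(θ₁) ≠ 0` for all `q < k < p`. -/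
theorem thom_encoding_no_common_zero_above (p : ℕ) (P : Polynomial ℝ)
    (hdeg : P.natDegree ≤ p) (hlc : P.coeff p ≠ 0)
    (θ₁ θ₂ : ℝ) (η₁ η₂ : ℕ → SignType)
    (hη₁ : ∀ k ≤ p, η₁ k =
      if k = p then SignType.sign (P.coeff p)
      else SignType.sign ((Polynomial.derivative^[k] P).eval θ₁))
    (hη₂ : ∀ k ≤ p, η₂ k =
      if k = p then SignType.sign (P.coeff p)
      else SignType.sign ((Polynomial.derivative^[k] P).eval θ₂))
    (q : ℕ)
    (hne : η₁ q ≠ η₂ q)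
    (hmax : ∀ k, q < k → k ≤ p → η₁ k = η₂ k) :
    ∀ k, q < k → k < p → (Polynomial.derivative^[k] P).eval θ₁ ≠ 0 := by
  intro k hqk hkp
  have hsign : ∀ j, q < j → j < p → SignType.sign ((derivative^[j] P).eval θ₁) =
      SignType.sign ((derivative^[j] P).eval θ₂) := fun j hqj hjp => by
    simpa only [hη₁ j hjp.le, hη₂ j hjp.le, if_neg hjp.ne] using hmax j hqj hjp.le
  have hθ : θ₁ ≠ θ₂ := by
    rintro rfl
    exact hne (by rw [hη₁ q (hqk.trans hkp).le, hη₂ q (hqk.trans hkp).le])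
  have htop : ∀ x ∈ uIcc θ₁ θ₂, (derivative^[p] P).eval x ≠ 0 := fun x _ => by
    rw [iterate_derivative_eq_C_of_natDegree_le hdeg, eval_C, nsmul_eq_mul]
    exact mul_ne_zero (Nat.cast_ne_zero.mpr p.factorial_ne_zero) hlc
  exact iterate_derivative_eval_ne_zero_on_uIcc P hθ htop hsign k hqk hkp.le θ₁ left_mem_uIcc
end

section
/- Let p ≥ 1, let P(y) = y^p + Σ_{0≤h≤p−1} c_h·y^h ∈ ℝ[y] be monic of degree p, let 0 ≤ q ≤ p−1 and let t₁, t₂ ∈ ℝ. Suppose P^{(q)}(t₁) = 0, P^{(q)}(t₂) = 0, and for every k with q+1 ≤ k ≤ p−1, sign(P^{(k)}(t₁)) = sign(P^{(k)}(t₂)) and these common signs are nonzero. Then t₁ ≤ t₂. -/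
/-!
Suppose `t₂ < t₁`. The top derivative `P^{(p)} = p!` has no zero on `[t₂, t₁]`. Descending from
`k = p` to `k = q + 1`: if `P^{(k+1)}` has no zero there, then by Rolle `P^{(k)}` is injective,
hence strictly monotone, on `[t₂, t₁]`, so its values lie between its values at the endpoints,
which have the same nonzero sign. Thus `P^{(q+1)}` has no zero on `[t₂, t₁]`, and by Rolle again
`P^{(q)}` cannot vanish at both `t₂` and `t₁`.
-/

open Polynomial Set

theorem Polynomial.iterate_derivative_natDegree {R : Type*} [Semiring R] (P : R[X]) :
    derivative^[P.natDegree] P = C ((P.natDegree.factorial : R) * P.leadingCoeff) := by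
  have h0 : (derivative^[P.natDegree] P).natDegree = 0 := by
    have := natDegree_iterate_derivative P P.natDegree
    omega
  rw [eq_C_of_natDegree_eq_zero h0, coeff_iterate_derivative, zero_add, Nat.descFactorial_self,
    nsmul_eq_mul, leadingCoeff]

theorem Polynomial.deriv_eval_iterate_derivative {𝕜 : Type*} [NontriviallyNormedField 𝕜]
    (P : 𝕜[X]) (k : ℕ) :
    deriv (fun x => (derivative^[k] P).eval x) = fun x => (derivative^[k + 1] P).eval x := by
  ext x
  rw [Polynomial.deriv, Function.iterate_succ_apply']

theorem injOn_Icc_of_deriv_ne_zero {f : ℝ → ℝ} {a b : ℝ} (hf : ContinuousOn f (Icc a b))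
    (hf' : ∀ x ∈ Ioo a b, deriv f x ≠ 0) : InjOn f (Icc a b) := by
  have hlt : ∀ x ∈ Icc a b, ∀ y ∈ Icc a b, x < y → f x ≠ f y := by
    intro x hx y hy hxy hfxy
    obtain ⟨c, hc, hc0⟩ :=
      exists_deriv_eq_zero hxy (hf.mono (Icc_subset_Icc hx.1 hy.2)) hfxy
    exact hf' c (Ioo_subset_Ioo hx.1 hy.2 hc) hc0
  intro x hx y hy hfxy
  by_contra hne
  rcases lt_or_gt_of_ne hne with h | h
  · exact hlt x hx y hy h hfxy
  · exact hlt y hy x hx h hfxy.symm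

theorem ne_zero_of_sign_eq_of_deriv_ne_zero {f : ℝ → ℝ} {a b x : ℝ} (hab : a ≤ b)
    (hf : ContinuousOn f (Icc a b)) (hf' : ∀ x ∈ Ioo a b, deriv f x ≠ 0)
    (hsign : SignType.sign (f a) = SignType.sign (f b)) (hne : SignType.sign (f a) ≠ 0)
    (hx : x ∈ Icc a b) : f x ≠ 0 := by
  intro hfx
  have ha : a ∈ Icc a b := left_mem_Icc.2 hab
  have hb : b ∈ Icc a b := right_mem_Icc.2 hab
  have hbetween : (f a ≤ 0 ∧ 0 ≤ f b) ∨ (f b ≤ 0 ∧ 0 ≤ f a) := by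
    rcases hf.strictMonoOn_of_injOn_Icc' hab (injOn_Icc_of_deriv_ne_zero hf hf') with h | h
    · exact .inl ⟨hfx ▸ h.monotoneOn ha hx hx.1, hfx ▸ h.monotoneOn hx hb hx.2⟩
    · exact .inr ⟨hfx ▸ h.antitoneOn hx hb hx.2, hfx ▸ h.antitoneOn ha hx hx.1⟩
  apply hne
  rcases hbetween with ⟨h₁, h₂⟩ | ⟨h₁, h₂⟩
  · exact le_antisymm (sign_nonpos_iff.2 h₁) (hsign ▸ sign_nonneg_iff.2 h₂)
  · exact le_antisymm (hsign ▸ sign_nonpos_iff.2 h₁) (sign_nonneg_iff.2 h₂)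

theorem Polynomial.iterate_derivative_eval_ne_zero_of_sign_eq {P : ℝ[X]} {a b : ℝ} (hab : a ≤ b)
    {m n : ℕ} (hmn : m ≤ n) (htop : ∀ x ∈ Icc a b, (derivative^[n] P).eval x ≠ 0)
    (hsign : ∀ k, m ≤ k → k < n →
      SignType.sign ((derivative^[k] P).eval a) = SignType.sign ((derivative^[k] P).eval b) ∧
      SignType.sign ((derivative^[k] P).eval a) ≠ 0) :
    ∀ x ∈ Icc a b, (derivative^[m] P).eval x ≠ 0 := by
  induction hmn using Nat.decreasingInduction with
  | self => exact htop
  | of_succ k hk ih =>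
    have hnext := ih fun j hj hjn => hsign j (by omega) hjn
    obtain ⟨hk_sign, hk_ne⟩ := hsign k le_rfl hk
    intro x hx
    refine ne_zero_of_sign_eq_of_deriv_ne_zero hab (Polynomial.continuous _).continuousOn
      (fun y hy => ?_) hk_sign hk_ne hx
    rw [deriv_eval_iterate_derivative]
    exact hnext y (Ioo_subset_Icc_self hy)

/-- Semantic content of Lemma `lem:eq_thom_enc_eq_root`: if `t₁, t₂` are both
roots of `P^{(q)}` and the signs of `P^{(k)}(t₁)` and `P^{(k)}(t₂)` agree and
are nonzero for all `q+1 ≤ k ≤ p-1`, where `P` is monic of degree `p ≥ 1`,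
then `t₁ ≤ t₂`. -/
theorem thom_same_encoding_le (p : ℕ) (hp : 1 ≤ p) (P : Polynomial ℝ)
    (hmon : P.Monic) (hdeg : P.natDegree = p)
    (q : ℕ) (hq : q ≤ p - 1) (t₁ t₂ : ℝ)
    (h₁ : (Polynomial.derivative^[q] P).eval t₁ = 0)
    (h₂ : (Polynomial.derivative^[q] P).eval t₂ = 0)
    (hsame : ∀ k, q + 1 ≤ k → k ≤ p - 1 →
      SignType.sign ((Polynomial.derivative^[k] P).eval t₁) =
        SignType.sign ((Polynomial.derivative^[k] P).eval t₂) ∧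
      SignType.sign ((Polynomial.derivative^[k] P).eval t₁) ≠ 0) :
    t₁ ≤ t₂ := by
  by_contra! hlt
  have htop : ∀ x ∈ Icc t₂ t₁, (derivative^[p] P).eval x ≠ 0 := by
    intro x _
    rw [← hdeg, iterate_derivative_natDegree, hmon.leadingCoeff, eval_C, mul_one]
    exact_mod_cast Nat.factorial_ne_zero _
  have hzero_free := iterate_derivative_eval_ne_zero_of_sign_eq hlt.le (m := q + 1) (by omega)
    htop fun k hk hkp =>
      have ⟨hk_sign, hk_ne⟩ := hsame k hk (by omega)
      ⟨hk_sign.symm, hk_sign ▸ hk_ne⟩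
  have hinj := injOn_Icc_of_deriv_ne_zero (Polynomial.continuous _).continuousOn fun x hx => by
    rw [deriv_eval_iterate_derivative]
    exact hzero_free x (Ioo_subset_Icc_self hx)
  exact hlt.ne (hinj (left_mem_Icc.2 hlt.le) (right_mem_Icc.2 hlt.le) (h₂.trans h₁.symm))
end

section
/- Let p ≥ 1, let P(y) = y^p + Σ_{0≤h≤p−1} c_h·y^h ∈ ℝ[y] be monic of degree p, let 0 ≤ q ≤ p−1 and let t₁, t₂ ∈ ℝ. Suppose P^{(q)}(t₁) = 0, P^{(q)}(t₂) = 0, and for every k with q+1 ≤ k ≤ p−1, sign(P^{(k)}(t₁)) = sign(P^{(k)}(t₂)) and these common signs are nonzero. Then t₁ = t₂. -/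
/-!
Rolle's theorem reduces the claim to showing that `P^{(q+1)}` has no root between `t₁` and `t₂`.
This is proved by descending induction on `k` from `k = p`, where `P^{(p)} = p!`: if
`P^{(k+1)}` has no root on the interval, then `P^{(k)}` is strictly monotone or antitone there, so it cannot
vanish between two points where it takes values of the same nonzero sign.
-/

open Polynomial Set

lemma mul_pos_of_sign_eq {x y : ℝ} (hxy : SignType.sign x = SignType.sign y)
    (hx : SignType.sign x ≠ 0) : 0 < x * y := by
  rw [← sign_eq_one_iff, sign_mul, ← hxy]
  generalize SignType.sign x = s at hx ⊢
  cases s <;> simp_all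

lemma strictMonoOn_or_strictAntiOn_of_hasDerivWithinAt_ne_zero {D : Set ℝ} (hD : Convex ℝ D)
    {f f' : ℝ → ℝ} (hf : ∀ x ∈ D, HasDerivWithinAt f (f' x) D x) (hf' : ∀ x ∈ D, f' x ≠ 0) :
    StrictMonoOn f D ∨ StrictAntiOn f D := by
  have hcont : ContinuousOn f D := fun x hx => (hf x hx).continuousWithinAt
  have hint : ∀ x ∈ interior D, HasDerivWithinAt f (f' x) (interior D) x :=
    fun x hx => (hf x (interior_subset hx)).mono interior_subset
  rcases hasDerivWithinAt_forall_lt_or_forall_gt_of_forall_ne hD hf hf' with hneg | hpos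
  · exact .inr <| strictAntiOn_of_hasDerivWithinAt_neg hD hcont hint
      fun x hx => hneg x (interior_subset hx)
  · exact .inl <| strictMonoOn_of_hasDerivWithinAt_pos hD hcont hint
      fun x hx => hpos x (interior_subset hx)

lemma ne_zero_of_monotoneOn_or_antitoneOn_of_mul_pos {f : ℝ → ℝ} {a b x : ℝ}
    (hf : MonotoneOn f (Icc a b) ∨ AntitoneOn f (Icc a b)) (hab : 0 < f a * f b)
    (hx : x ∈ Icc a b) : f x ≠ 0 := by
  intro hfx
  have ha : a ∈ Icc a b := left_mem_Icc.2 (hx.1.trans hx.2)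
  have hb : b ∈ Icc a b := right_mem_Icc.2 (hx.1.trans hx.2)
  rcases hf with hmono | hanti
  · have := mul_nonpos_of_nonpos_of_nonneg (hfx ▸ hmono ha hx hx.1) (hfx ▸ hmono hx hb hx.2)
    linarith
  · have := mul_nonpos_of_nonneg_of_nonpos (hfx ▸ hanti ha hx hx.1) (hfx ▸ hanti hx hb hx.2)
    linarith

namespace Polynomial

lemma iterate_derivative_natDegree_s4 {R : Type*} [Semiring R] (P : R[X]) :
    derivative^[P.natDegree] P = C (P.natDegree.factorial • P.leadingCoeff) := by
  refine eq_C_of_natDegree_eq_zero (Nat.eq_zero_of_le_zero ?_) |>.trans ?_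
  · simpa using natDegree_iterate_derivative P P.natDegree
  · rw [coeff_iterate_derivative, zero_add, Nat.descFactorial_self, leadingCoeff]

lemma eval_ne_zero_on_Icc_of_derivative {P : ℝ[X]} {a b : ℝ}
    (hP' : ∀ x ∈ Icc a b, P.derivative.eval x ≠ 0) (hab : 0 < P.eval a * P.eval b) :
    ∀ x ∈ Icc a b, P.eval x ≠ 0 := by
  have hmono := strictMonoOn_or_strictAntiOn_of_hasDerivWithinAt_ne_zero (convex_Icc a b)
    (fun x _ => (P.hasDerivAt x).hasDerivWithinAt) hP'
  exact fun x => ne_zero_of_monotoneOn_or_antitoneOn_of_mul_pos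
    (hmono.imp StrictMonoOn.monotoneOn StrictAntiOn.antitoneOn) hab

lemma eval_iterate_derivative_ne_zero_on_Icc {P : ℝ[X]} {a b : ℝ} {m n : ℕ} (hmn : m ≤ n)
    (hn : ∀ x ∈ Icc a b, (derivative^[n] P).eval x ≠ 0)
    (hpos : ∀ k, m ≤ k → k < n →
      0 < (derivative^[k] P).eval a * (derivative^[k] P).eval b) :
    ∀ x ∈ Icc a b, (derivative^[m] P).eval x ≠ 0 := by
  refine Nat.decreasingInduction' (fun k hkn hmk ih => ?_) hmn hn
  rw [Function.iterate_succ_apply'] at ih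
  exact eval_ne_zero_on_Icc_of_derivative ih (hpos k hmk hkn)

end Polynomial

/-- Semantic content of Proposition `thWITL_eq`: if `t₁, t₂` are both
roots of `P^{(q)}` and the signs of `P^{(k)}(t₁)` and `P^{(k)}(t₂)` agree and
are nonzero for all `q+1 ≤ k ≤ p-1`, where `P` is monic of degree `p ≥ 1`,
then `t₁ = t₂`. -/
theorem thom_same_encoding_eq (p : ℕ) (hp : 1 ≤ p) (P : Polynomial ℝ)
    (hmon : P.Monic) (hdeg : P.natDegree = p)
    (q : ℕ) (hq : q ≤ p - 1) (t₁ t₂ : ℝ)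
    (h₁ : (Polynomial.derivative^[q] P).eval t₁ = 0)
    (h₂ : (Polynomial.derivative^[q] P).eval t₂ = 0)
    (hsame : ∀ k, q + 1 ≤ k → k ≤ p - 1 →
      SignType.sign ((Polynomial.derivative^[k] P).eval t₁) =
        SignType.sign ((Polynomial.derivative^[k] P).eval t₂) ∧
      SignType.sign ((Polynomial.derivative^[k] P).eval t₁) ≠ 0) :
    t₁ = t₂ := by
  have hpos : ∀ k, q + 1 ≤ k → k < p →
      0 < (derivative^[k] P).eval t₁ * (derivative^[k] P).eval t₂ := fun k hqk hkp =>
    mul_pos_of_sign_eq (hsame k hqk (by omega)).1 (hsame k hqk (by omega)).2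
  have htop : ∀ x, (derivative^[p] P).eval x ≠ 0 := by
    simp [← hdeg, iterate_derivative_natDegree_s4, hmon.leadingCoeff, Nat.factorial_ne_zero]
  clear hsame
  wlog hle : t₁ ≤ t₂ generalizing t₁ t₂
  · exact (this t₂ t₁ h₂ h₁ (fun k hqk hkp => by rw [mul_comm]; exact hpos k hqk hkp)
      (le_of_not_ge hle)).symm
  refine hle.eq_or_lt.resolve_right fun hlt => ?_
  obtain ⟨c, hc, hc0⟩ :=
    exists_deriv_eq_zero hlt (derivative^[q] P).continuousOn (h₁.trans h₂.symm)
  rw [Polynomial.deriv, ← Function.iterate_succ_apply' derivative] at hc0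
  exact eval_iterate_derivative_ne_zero_on_Icc (by omega) (fun x _ => htop x) hpos c
    (Ioo_subset_Icc_self hc) hc0
end

section
/- Let Q be a finite family of monic polynomials in ℝ[y], let t₁ < t₂ < … < t_r be real numbers (r ≥ 0), and suppose that each P ∈ Q factors as P(y) = ∏_{j=1}^{r} (y − t_j)^{m_{P,j}} · ∏_{k=1}^{n_P} ((y − a_{P,k})² + b_{P,k}²) with nonnegative integer exponents m_{P,j} and real numbers a_{P,k}, b_{P,k} with b_{P,k} ≠ 0. For 1 ≤ j ≤ r define the sign vector σ_j ∈ {−1,0,1}^Q by σ_j(P) = 0 if m_{P,j} > 0 and σ_j(P) = (−1)^{Σ_{j < j' ≤ r} m_{P,j'}} if m_{P,j} = 0, and for 1 ≤ j ≤ r+1 define σ_{(j−1,j)} ∈ {−1,0,1}^Q by σ_{(j−1,j)}(P) = (−1)^{Σ_{j ≤ j' ≤ r} m_{P,j'}} (empty sums being 0). Then the set { (sign(P(y)))_{P ∈ Q} : y ∈ ℝ } of realizable sign vectors on Q is exactly {σ_{(0,1)}, σ₁, σ_{(1,2)}, …, σ_r, σ_{(r,r+1)}}. -/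
/-!
Each positive-definite quadratic factor is positive on `ℝ`, so the sign of `P(y)` is
`∏ⱼ sign (y - tⱼ) ^ m_{P,j}`. At a root `y = t_J` this is `0` when `m_{P,J} > 0` and
otherwise `(-1)` to the total multiplicity of the roots above `t_J`; at any other point it is
`(-1)` to the total multiplicity of the roots above `y`, and since the `tⱼ` are increasing
those roots are exactly `t_c, …, t_r` for some `1 ≤ c ≤ r + 1`. Conversely every such `c` is
realized by a point strictly between `t_{c-1}` and `t_c`.
-/

open Polynomial Finset

theorem sign_eval_prod_mul_prod_sq_add_sq {α β : Type*} (s : Finset α) (t : α → ℝ)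
    (m : α → ℕ) (u : Finset β) (a b : β → ℝ) (hb : ∀ k ∈ u, b k ≠ 0) (y : ℝ) :
    SignType.sign (((∏ j ∈ s, (X - C (t j)) ^ m j) *
        ∏ k ∈ u, ((X - C (a k)) ^ 2 + C (b k) ^ 2)).eval y) =
      ∏ j ∈ s, SignType.sign (y - t j) ^ m j := by
  have hpos : 0 < ∏ k ∈ u, ((y - a k) ^ 2 + b k ^ 2) :=
    prod_pos fun k hk => by have := hb k hk; positivity
  simp only [eval_mul, eval_prod, eval_pow, eval_add, eval_sub, eval_X, eval_C]
  rw [sign_mul, sign_pos hpos, mul_one]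
  exact (map_prod (signHom : ℝ →*₀ SignType) _ _).trans
    (prod_congr rfl fun j _ => sign_pow _ _)

theorem prod_sign_sub_pow {α : Type*} (s : Finset α) (t : α → ℝ) (m : α → ℕ) (y : ℝ) :
    ∏ j ∈ s, SignType.sign (y - t j) ^ m j =
      if ∃ j ∈ s, t j = y ∧ 0 < m j then 0 else (-1) ^ ∑ j ∈ s with y < t j, m j := by
  split_ifs with hroot
  · obtain ⟨j, hj, rfl, hm⟩ := hroot
    exact prod_eq_zero hj (by rw [sub_self, sign_zero, zero_pow hm.ne'])
  · push Not at hroot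
    rw [sum_filter, ← prod_pow_eq_pow_sum]
    refine prod_congr rfl fun j hj => ?_
    rcases lt_trichotomy y (t j) with hlt | rfl | hgt
    · rw [sign_neg (sub_neg.2 hlt), if_pos hlt]
    · rw [Nat.le_zero.1 (hroot j hj rfl), if_neg (lt_irrefl _), pow_zero, pow_zero]
    · rw [sign_pos (sub_pos.2 hgt), if_neg hgt.not_gt, one_pow, pow_zero]

theorem prod_sign_sub_pow_of_mem {α : Type*} [LinearOrder α] {s : Finset α} {t : α → ℝ}
    (ht : StrictMonoOn t s) (m : α → ℕ) {J : α} (hJ : J ∈ s) :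
    ∏ j ∈ s, SignType.sign (t J - t j) ^ m j =
      if 0 < m J then 0 else (-1) ^ ∑ j ∈ s with J < j, m j := by
  have hroot : (∃ j ∈ s, t j = t J ∧ 0 < m j) ↔ 0 < m J :=
    ⟨fun ⟨j, hj, htj, hm⟩ => ht.injOn hj hJ htj ▸ hm, fun hm => ⟨J, hJ, rfl, hm⟩⟩
  have hcut : ({j ∈ s | t J < t j} : Finset α) = {j ∈ s | J < j} :=
    filter_congr fun j hj => ht.lt_iff_lt hJ hj
  rw [prod_sign_sub_pow, hcut, if_congr hroot rfl rfl]

theorem exists_forall_ne_filter_lt_eq {α : Type*} [LinearOrder α] {s : Finset α}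
    {t : α → ℝ} (ht : StrictMonoOn t s) (c : α) :
    ∃ y, (∀ j ∈ s, t j ≠ y) ∧ ({j ∈ s | y < t j} : Finset α) = {j ∈ s | c ≤ j} := by
  obtain ⟨y, hbelow, habove⟩ := exists_between' ({j ∈ s | j < c}.image t)
    ({j ∈ s | c ≤ j}.image t) <| by
      simp only [forall_mem_image, mem_filter]
      exact fun i hi j hj => ht hi.1 hj.1 (hi.2.trans_le hj.2)
  simp only [forall_mem_image, mem_filter] at hbelow habove
  refine ⟨y, fun j hj => ?_, filter_congr fun j hj => ?_⟩
  · rcases lt_or_ge j c with hjc | hcj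
    · exact (hbelow ⟨hj, hjc⟩).ne
    · exact (habove ⟨hj, hcj⟩).ne'
  · rcases lt_or_ge j c with hjc | hcj
    · exact iff_of_false (hbelow ⟨hj, hjc⟩).not_gt hjc.not_ge
    · exact iff_of_true (habove ⟨hj, hcj⟩) hcj

theorem exists_filter_lt_eq_Icc {t : ℕ → ℝ} {r : ℕ} (ht : MonotoneOn t (Icc 1 r : Finset ℕ))
    (y : ℝ) :
    ∃ c, 1 ≤ c ∧ c ≤ r + 1 ∧ ({j ∈ Icc 1 r | y < t j} : Finset ℕ) = Icc c r := by
  by_cases hne : ({j ∈ Icc 1 r | y < t j} : Finset ℕ).Nonempty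
  · set c := min' _ hne
    obtain ⟨hc, hyc⟩ := mem_filter.1 (min'_mem _ hne)
    refine ⟨c, (mem_Icc.1 hc).1, by linarith [(mem_Icc.1 hc).2], ?_⟩
    ext j
    constructor
    · intro hj
      exact mem_Icc.2 ⟨min'_le _ j hj, (mem_Icc.1 (mem_filter.1 hj).1).2⟩
    · intro hj
      have hj' : j ∈ Icc 1 r :=
        mem_Icc.2 ⟨(mem_Icc.1 hc).1.trans (mem_Icc.1 hj).1, (mem_Icc.1 hj).2⟩
      exact mem_filter.2 ⟨hj', hyc.trans_le (ht hc hj' (mem_Icc.1 hj).1)⟩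
  · refine ⟨r + 1, le_add_self, le_rfl, ?_⟩
    rw [not_nonempty_iff_eq_empty.1 hne, Icc_eq_empty (by omega)]

theorem realizable_sign_vectors_general (ι : Type*) (Pf : ι → Polynomial ℝ)
    (r : ℕ) (t : ℕ → ℝ)
    (ht : ∀ j j', 1 ≤ j → j < j' → j' ≤ r → t j < t j')
    (m : ι → ℕ → ℕ) (n : ι → ℕ) (a b : ι → ℕ → ℝ)
    (hb : ∀ i k, 1 ≤ k → k ≤ n i → b i k ≠ 0)
    (hfact : ∀ i, Pf i =
      (∏ j ∈ Finset.Icc 1 r, (X - C (t j)) ^ m i j) *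
        ∏ k ∈ Finset.Icc 1 (n i), ((X - C (a i k)) ^ 2 + C (b i k) ^ 2)) :
    {s : ι → SignType | ∃ y : ℝ, ∀ i, s i = SignType.sign ((Pf i).eval y)} =
      {s : ι → SignType |
        (∃ j, 1 ≤ j ∧ j ≤ r ∧ ∀ i, s i =
          if 0 < m i j then 0
          else (-1 : SignType) ^ ∑ j' ∈ Finset.Icc (j + 1) r, m i j') ∨
        (∃ j, 1 ≤ j ∧ j ≤ r + 1 ∧ ∀ i, s i =
          (-1 : SignType) ^ ∑ j' ∈ Finset.Icc j r, m i j')} := by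
  have hmono : StrictMonoOn t (Icc 1 r : Finset ℕ) := fun j hj j' hj' hlt =>
    ht j j' (mem_Icc.1 hj).1 hlt (mem_Icc.1 hj').2
  have hsign (y : ℝ) (i : ι) :
      SignType.sign ((Pf i).eval y) = ∏ j ∈ Icc 1 r, SignType.sign (y - t j) ^ m i j := by
    rw [hfact i]
    exact sign_eval_prod_mul_prod_sq_add_sq _ _ _ _ _ _
      (fun k hk => hb i k (mem_Icc.1 hk).1 (mem_Icc.1 hk).2) y
  have hroot (J : ℕ) (hJ : J ∈ Icc 1 r) (i : ι) : SignType.sign ((Pf i).eval (t J)) =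
      if 0 < m i J then 0 else (-1) ^ ∑ j ∈ Icc (J + 1) r, m i j := by
    rw [hsign, prod_sign_sub_pow_of_mem hmono _ hJ]
    congr 3
    ext j
    simp only [mem_filter, mem_Icc]
    omega
  have hgap (y : ℝ) (hy : ∀ j ∈ Icc 1 r, t j ≠ y) (c : ℕ)
      (hc : ({j ∈ Icc 1 r | y < t j} : Finset ℕ) = Icc c r) (i : ι) :
      SignType.sign ((Pf i).eval y) = (-1) ^ ∑ j ∈ Icc c r, m i j := by
    rw [hsign, prod_sign_sub_pow, if_neg fun ⟨j, hj, htj, _⟩ => hy j hj htj, hc]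
  ext s
  constructor
  · rintro ⟨y, hy⟩
    by_cases hyroot : ∃ J ∈ Icc 1 r, t J = y
    · obtain ⟨J, hJ, rfl⟩ := hyroot
      exact Or.inl ⟨J, (mem_Icc.1 hJ).1, (mem_Icc.1 hJ).2, fun i => (hy i).trans (hroot J hJ i)⟩
    · push Not at hyroot
      obtain ⟨c, hc1, hcr, hc⟩ := exists_filter_lt_eq_Icc hmono.monotoneOn y
      exact Or.inr ⟨c, hc1, hcr, fun i => (hy i).trans (hgap y hyroot c hc i)⟩
  · rintro (⟨J, hJ1, hJr, hs⟩ | ⟨c, hc1, hcr, hs⟩)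
    · exact ⟨t J, fun i => (hs i).trans (hroot J (mem_Icc.2 ⟨hJ1, hJr⟩) i).symm⟩
    · obtain ⟨y, hy, hcut⟩ := exists_forall_ne_filter_lt_eq hmono c
      refine ⟨y, fun i => (hs i).trans (hgap y hy c ?_ i).symm⟩
      rw [hcut]
      ext j
      simp only [mem_filter, mem_Icc]
      omega

/-- Semantic content of Proposition `weaksigndettab2`: for a finite family of
monic real polynomials factored over the ordered real roots `t₁ < … < t_r`
(with positive-definite quadratic factors, `r ≥ 0`), the set of realizable
sign vectors on the family is exactly
`{σ_{(0,1)}, σ₁, σ_{(1,2)}, …, σ_r, σ_{(r,r+1)}}`, where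
`σ_j(P) = 0` if `m_{P,j} > 0` and `σ_j(P) = (-1)^{∑_{j < j' ≤ r} m_{P,j'}}`
otherwise, and `σ_{(j-1,j)}(P) = (-1)^{∑_{j ≤ j' ≤ r} m_{P,j'}}`. -/
theorem realizable_sign_vectors (ι : Type*) [Fintype ι] (Pf : ι → Polynomial ℝ)
    (hmon : ∀ i, (Pf i).Monic)
    (r : ℕ) (t : ℕ → ℝ)
    (ht : ∀ j j', 1 ≤ j → j < j' → j' ≤ r → t j < t j')
    (m : ι → ℕ → ℕ) (n : ι → ℕ) (a b : ι → ℕ → ℝ)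
    (hb : ∀ i k, 1 ≤ k → k ≤ n i → b i k ≠ 0)
    (hfact : ∀ i, Pf i =
      (∏ j ∈ Finset.Icc 1 r, (X - C (t j)) ^ m i j) *
        ∏ k ∈ Finset.Icc 1 (n i), ((X - C (a i k)) ^ 2 + C (b i k) ^ 2)) :
    {s : ι → SignType | ∃ y : ℝ, ∀ i, s i = SignType.sign ((Pf i).eval y)} =
      {s : ι → SignType |
        (∃ j, 1 ≤ j ∧ j ≤ r ∧ ∀ i, s i =
          if 0 < m i j then 0
          else (-1 : SignType) ^ ∑ j' ∈ Finset.Icc (j + 1) r, m i j') ∨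
        (∃ j, 1 ≤ j ∧ j ≤ r + 1 ∧ ∀ i, s i =
          (-1 : SignType) ^ ∑ j' ∈ Finset.Icc j r, m i j')} :=
  realizable_sign_vectors_general ι Pf r t ht m n a b hb hfact
end
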